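/- Suppose f : ℝ^n × ℝ^m × ℝ^l → ℝ^n is affine, A ⊆ ℝ^n is convex, the set-valued map U satisfies: for all x₁, x₂ and λ ∈ (0,1), u₁ ∈ U(x₁) and u₂ ∈ U(x₂) imply λu₁ + (1−λ)u₂ ∈ U(λx₁ + (1−λ)x₂). Let D be a nonempty set of probability measures on ℝ^l, and let v : ℝ^n → ℝ be bounded, measurable, nonnegative, and concave on A. Define T v(x) = sup_{u ∈ U(x)} inf_{μ ∈ D} ∫ v(f(x, u, w)) dμ(w) for x ∈ A. Then T v is concave on A, provided f(x,u,w) ∈ A for all relevant (x,u,w). -/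

import Mathlib

/-!
Write `G(x, u) = inf_{μ ∈ D} ∫ v (f (x, u, w)) dμ(w)`. For each `w` the map `(x, u) ↦ v (f (x, u, w))`
is concave on the graph `{(x, u) | x ∈ A, u ∈ U x}`, since `f` is affine and maps the graph into `A`.
Integration against a probability measure and pointwise infima preserve concavity, so `G` is
concave on the graph. The graph is convex, and maximising a jointly concave function over the
fibres of a convex set yields a concave function of the base point.
-/

open MeasureTheory Set

section Concavity

variable {E F W : Type*} [AddCommGroup E] [Module ℝ E] [AddCommGroup F] [Module ℝ F]
  [AddCommGroup W] [Module ℝ W]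

def graphOver (A : Set E) (U : E → Set F) : Set (E × F) := {p | p.1 ∈ A ∧ p.2 ∈ U p.1}

lemma convex_graphOver {A : Set E} {U : E → Set F} (hA : Convex ℝ A)
    (hU : ∀ x₁ x₂ : E, ∀ lam ∈ Ioo (0 : ℝ) 1, ∀ u₁ ∈ U x₁, ∀ u₂ ∈ U x₂,
      lam • u₁ + (1 - lam) • u₂ ∈ U (lam • x₁ + (1 - lam) • x₂)) :
    Convex ℝ (graphOver A U) := by
  refine convex_iff_forall_pos.2 fun p hp q hq a b ha hb hab => ?_
  obtain rfl : b = 1 - a := by linarith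
  exact ⟨hA hp.1 hq.1 ha.le hb.le hab, hU _ _ a ⟨ha, by linarith⟩ _ hp.2 _ hq.2⟩

lemma ConcaveOn.ciSup_graphOver {A : Set E} {U : E → Set F} {G : E × F → ℝ}
    (hG : ConcaveOn ℝ (graphOver A U) G) (hA : Convex ℝ A)
    (hne : ∀ x ∈ A, (U x).Nonempty)
    (hbdd : ∀ x ∈ A, BddAbove (range fun u : U x => G (x, u))) :
    ConcaveOn ℝ A fun x => ⨆ u : U x, G (x, u) := by
  refine ⟨hA, fun x₁ hx₁ x₂ hx₂ a b ha hb hab => ?_⟩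
  have := (hne x₁ hx₁).to_subtype
  have := (hne x₂ hx₂).to_subtype
  simp only [smul_eq_mul, Real.mul_iSup_of_nonneg ha, Real.mul_iSup_of_nonneg hb]
  refine ciSup_add_ciSup_le fun u₁ u₂ => ?_
  have hp₁ : (x₁, (u₁ : F)) ∈ graphOver A U := ⟨hx₁, u₁.2⟩
  have hp₂ : (x₂, (u₂ : F)) ∈ graphOver A U := ⟨hx₂, u₂.2⟩
  calc a * G (x₁, u₁) + b * G (x₂, u₂)
      ≤ G (a • x₁ + b • x₂, a • u₁ + b • u₂) := hG.2 hp₁ hp₂ ha hb hab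
    _ ≤ ⨆ u : U (a • x₁ + b • x₂), G (a • x₁ + b • x₂, u) :=
      le_ciSup (f := fun u : U (a • x₁ + b • x₂) => G (a • x₁ + b • x₂, u))
        (hbdd _ (hA hx₁ hx₂ ha hb hab)) ⟨_, (hG.1 hp₁ hp₂ ha hb hab).2⟩

lemma ConcaveOn.ciInf {ι : Sort*} [Nonempty ι] {s : Set E} {g : ι → E → ℝ}
    (hg : ∀ i, ConcaveOn ℝ s (g i)) (hbdd : ∀ x ∈ s, BddBelow (range fun i => g i x)) :
    ConcaveOn ℝ s fun x => ⨅ i, g i x := by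
  refine ⟨(hg (Classical.arbitrary ι)).1, fun x hx y hy a b ha hb hab => le_ciInf fun i => ?_⟩
  calc _ ≤ a • g i x + b • g i y := by
        gcongr
        exacts [ciInf_le (hbdd x hx) i, ciInf_le (hbdd y hy) i]
    _ ≤ g i (a • x + b • y) := (hg i).2 hx hy ha hb hab

lemma ConcaveOn.integral {α : Type*} [MeasurableSpace α] {μ : Measure α} {s : Set E}
    {φ : E → α → ℝ} (hs : Convex ℝ s) (hφ : ∀ w, ConcaveOn ℝ s (φ · w))
    (hint : ∀ x ∈ s, Integrable (φ x) μ) :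
    ConcaveOn ℝ s fun x => ∫ w, φ x w ∂μ := by
  refine ⟨hs, fun x hx y hy a b ha hb hab => ?_⟩
  calc a • ∫ w, φ x w ∂μ + b • ∫ w, φ y w ∂μ = ∫ w, a • φ x w + b • φ y w ∂μ := by
        rw [← integral_smul, ← integral_smul]
        exact (integral_add ((hint x hx).smul a) ((hint y hy).smul b)).symm
    _ ≤ ∫ w, φ (a • x + b • y) w ∂μ :=
      integral_mono (((hint x hx).smul a).add ((hint y hy).smul b))
        (hint _ (hs hx hy ha hb hab)) fun w => (hφ w).2 hx hy ha hb hab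

lemma ConcaveOn.comp_affineMap_prodMk {G : Type*} [AddCommGroup G] [Module ℝ G]
    {s : Set G} {v : G → ℝ} (hv : ConcaveOn ℝ s v) (f : E × F × W →ᵃ[ℝ] G) (w : W)
    {t : Set (E × F)} (ht : Convex ℝ t) (hts : ∀ p ∈ t, f (p.1, p.2, w) ∈ s) :
    ConcaveOn ℝ t fun p => v (f (p.1, p.2, w)) :=
  (hv.comp_affineMap
    (f.comp (AffineMap.fst.prod (AffineMap.snd.prod (AffineMap.const ℝ _ w))))).subset hts ht

end Concavity

theorem bellman_operator_preserves_concavity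
    (n m l : ℕ)
    (f : (EuclideanSpace ℝ (Fin n) × EuclideanSpace ℝ (Fin m) × EuclideanSpace ℝ (Fin l))
          →ᵃ[ℝ] EuclideanSpace ℝ (Fin n))
    (A : Set (EuclideanSpace ℝ (Fin n))) (hA : Convex ℝ A)
    (U : EuclideanSpace ℝ (Fin n) → Set (EuclideanSpace ℝ (Fin m)))
    (hUne : ∀ x, (U x).Nonempty)
    (hU : ∀ x₁ x₂ : EuclideanSpace ℝ (Fin n), ∀ lam ∈ Set.Ioo (0:ℝ) 1,
      ∀ u₁ ∈ U x₁, ∀ u₂ ∈ U x₂,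
        lam • u₁ + (1 - lam) • u₂ ∈ U (lam • x₁ + (1 - lam) • x₂))
    (D : Set (Measure (EuclideanSpace ℝ (Fin l)))) (hD : D.Nonempty)
    (hprob : ∀ μ ∈ D, IsProbabilityMeasure μ)
    (v : EuclideanSpace ℝ (Fin n) → ℝ) (M : ℝ)
    (hv_meas : Measurable v) (hv0 : ∀ x, 0 ≤ v x) (hvM : ∀ x, v x ≤ M)
    (hv_conc : ConcaveOn ℝ A v)
    (hinv : ∀ x ∈ A, ∀ u ∈ U x, ∀ w : EuclideanSpace ℝ (Fin l), f (x, u, w) ∈ A) :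
    ConcaveOn ℝ A (fun x =>
      ⨆ u : U x, ⨅ μ : D, ∫ w, v (f (x, (u : EuclideanSpace ℝ (Fin m)), w))
        ∂((μ : Measure (EuclideanSpace ℝ (Fin l))))) := by
  have := hD.to_subtype
  have hgraph := convex_graphOver hA hU
  have hint (p : _ × _) (μ : D) : Integrable (fun w => v (f (p.1, p.2, w))) (μ : Measure _) :=
    have := hprob μ μ.2
    .of_bound (hv_meas.comp (f.continuous_of_finiteDimensional.measurable.comp
      (measurable_prodMk_left.comp measurable_prodMk_left))).aestronglyMeasurable M
      (.of_forall fun _ => (Real.norm_of_nonneg (hv0 _)).trans_le (hvM _))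
  have hIM (p : _ × _) (μ : D) : ∫ w, v (f (p.1, p.2, w)) ∂(μ : Measure _) ≤ M := by
    have := hprob μ μ.2
    simpa using integral_mono (hint p μ) (integrable_const M) fun _ => hvM _
  have hbddBelow (p : _ × _) :
      BddBelow (range fun μ : D => ∫ w, v (f (p.1, p.2, w)) ∂(μ : Measure _)) :=
    ⟨0, forall_mem_range.2 fun _ => integral_nonneg fun _ => hv0 _⟩
  have hG := ConcaveOn.ciInf (fun μ : D => ConcaveOn.integral hgraph
    (fun w => hv_conc.comp_affineMap_prodMk f w hgraph fun p hp => hinv _ hp.1 _ hp.2 w)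
    fun p _ => hint p μ) fun p _ => hbddBelow p
  refine hG.ciSup_graphOver hA (fun x _ => hUne x) fun x _ => ⟨M, forall_mem_range.2 fun u => ?_⟩
  obtain ⟨μ⟩ := ‹Nonempty D›
  exact ciInf_le_of_le (hbddBelow _) μ (hIM _ μ)
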